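/- Let W : ℝ → Matrix (Fin n) (Fin n) ℝ be a differentiable family of invertible symmetric positive definite matrices with M(θ) = W(θ)⁻¹, and μ > 0. Then -μ·W(θ) ≼ W'(θ) ≼ μ·W(θ) holds if and only if -μ·M(θ) ≼ M'(θ) ≼ μ·M(θ). -/

import Mathlib

/-!
Differentiating `W M = 1` gives `M' = -M W' M`. Since also `μ M = M (μ W) M`, the two bounds on
`M'` are the congruences by the symmetric invertible matrix `M` of the two bounds on `W'`, in
swapped order, and such a congruence preserves and reflects positive semidefiniteness.
-/

open Matrix

/-- Entrywise derivative of a matrix-valued function. -/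
noncomputable def matDeriv {n : ℕ} (W : ℝ → Matrix (Fin n) (Fin n) ℝ) (θ : ℝ) :
    Matrix (Fin n) (Fin n) ℝ :=
  Matrix.of fun i j => deriv (fun t => W t i j) θ

namespace Matrix

variable {𝕜 E ι : Type*} [NontriviallyNormedField 𝕜] [NormedAddCommGroup E] [NormedSpace 𝕜 E]
  [Fintype ι] [DecidableEq ι] {A : E → Matrix ι ι 𝕜}

theorem differentiable_det (hA : ∀ i j, Differentiable 𝕜 fun x => A x i j) :
    Differentiable 𝕜 fun x => (A x).det := by
  simp only [det_apply]
  fun_prop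

theorem differentiable_adjugate_apply (hA : ∀ i j, Differentiable 𝕜 fun x => A x i j) (i j : ι) :
    Differentiable 𝕜 fun x => (A x).adjugate i j := by
  simp only [adjugate_apply]
  refine differentiable_det fun k l => ?_
  by_cases hk : k = j
  · subst hk; simp only [updateRow_self]; fun_prop
  · simpa only [updateRow_ne hk] using hA k l

theorem differentiable_inv_apply (hA : ∀ i j, Differentiable 𝕜 fun x => A x i j)
    (hdet : ∀ x, (A x).det ≠ 0) (i j : ι) :
    Differentiable 𝕜 fun x => (A x)⁻¹ i j := by
  simp only [inv_def, smul_apply, Ring.inverse_eq_inv', smul_eq_mul]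
  exact ((differentiable_det hA).inv hdet).mul (differentiable_adjugate_apply hA i j)

end Matrix

theorem matDeriv_mul {n : ℕ} {A B : ℝ → Matrix (Fin n) (Fin n) ℝ}
    (hA : ∀ i j, Differentiable ℝ fun t => A t i j)
    (hB : ∀ i j, Differentiable ℝ fun t => B t i j) (θ : ℝ) :
    matDeriv (fun t => A t * B t) θ = matDeriv A θ * B θ + A θ * matDeriv B θ := by
  ext i j
  simp only [matDeriv, of_apply, Matrix.add_apply, mul_apply, ← Finset.sum_add_distrib]
  rw [deriv_fun_sum (A := fun k t => A t i k * B t k j)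
    fun k _ => ((hA i k).mul (hB k j)).differentiableAt]
  exact Finset.sum_congr rfl fun k _ => deriv_fun_mul (hA i k θ) (hB k j θ)

theorem matDeriv_const {n : ℕ} (C : Matrix (Fin n) (Fin n) ℝ) (θ : ℝ) :
    matDeriv (fun _ => C) θ = 0 := by
  ext i j
  simp [matDeriv]

theorem matDeriv_inv {n : ℕ} {W : ℝ → Matrix (Fin n) (Fin n) ℝ}
    (hW : ∀ i j, Differentiable ℝ fun t => W t i j) (hdet : ∀ t, (W t).det ≠ 0) (θ : ℝ) :
    matDeriv (fun t => (W t)⁻¹) θ = -((W θ)⁻¹ * matDeriv W θ * (W θ)⁻¹) := by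
  have hunit : IsUnit (W θ).det := (hdet θ).isUnit
  have hprod : matDeriv (fun t => W t * (W t)⁻¹) θ = 0 := by
    simp only [fun t => mul_nonsing_inv (W t) (hdet t).isUnit, matDeriv_const]
  rw [matDeriv_mul hW (differentiable_inv_apply hW hdet) θ] at hprod
  calc matDeriv (fun t => (W t)⁻¹) θ
      = (W θ)⁻¹ * (matDeriv W θ * (W θ)⁻¹ + W θ * matDeriv (fun t => (W t)⁻¹) θ)
          - (W θ)⁻¹ * matDeriv W θ * (W θ)⁻¹ := by
        rw [mul_add, ← mul_assoc (W θ)⁻¹ (W θ), nonsing_inv_mul _ hunit, one_mul, mul_assoc]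
        abel
    _ = -((W θ)⁻¹ * matDeriv W θ * (W θ)⁻¹) := by rw [hprod, mul_zero, zero_sub]

namespace Matrix.IsHermitian

variable {R ι : Type*} [CommRing R] [PartialOrder R] [StarRing R] [Fintype ι] [DecidableEq ι]
  {W : Matrix ι ι R}

theorem posSemidef_inv_conj_iff (hW : W.IsHermitian) (hU : IsUnit W)
    (X : Matrix ι ι R) : (W⁻¹ * X * W⁻¹).PosSemidef ↔ X.PosSemidef := by
  have := (isUnit_nonsing_inv_iff.mpr hU).posSemidef_star_left_conjugate_iff (x := X)
  rwa [star_eq_conjTranspose, conjTranspose_nonsing_inv, hW.eq] at this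

theorem loewner_bound_iff_inv (hW : W.IsHermitian) (hU : IsUnit W)
    (D : Matrix ι ι R) (μ : R) :
    ((μ • W - D).PosSemidef ∧ (D + μ • W).PosSemidef) ↔
      ((μ • W⁻¹ - -(W⁻¹ * D * W⁻¹)).PosSemidef ∧ (-(W⁻¹ * D * W⁻¹) + μ • W⁻¹).PosSemidef) := by
  have hscale : μ • W⁻¹ = W⁻¹ * (μ • W) * W⁻¹ := by
    rw [Matrix.mul_smul, Matrix.smul_mul, nonsing_inv_mul W ((isUnit_iff_isUnit_det W).mp hU),
      one_mul]
  have hupper : μ • W⁻¹ - -(W⁻¹ * D * W⁻¹) = W⁻¹ * (D + μ • W) * W⁻¹ := by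
    rw [hscale, mul_add, add_mul]; abel
  have hlower : -(W⁻¹ * D * W⁻¹) + μ • W⁻¹ = W⁻¹ * (μ • W - D) * W⁻¹ := by
    rw [hscale, mul_sub, sub_mul]; abel
  rw [hupper, hlower, hW.posSemidef_inv_conj_iff hU, hW.posSemidef_inv_conj_iff hU, and_comm]

end Matrix.IsHermitian

theorem dual_metric_loewner_bound_iff_general {n : ℕ}
    (W M : ℝ → Matrix (Fin n) (Fin n) ℝ) (μ : ℝ)
    (hdiff : ∀ i j : Fin n, Differentiable ℝ fun θ => W θ i j)
    (hpd : ∀ θ : ℝ, (W θ).PosDef)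
    (hM : ∀ θ : ℝ, M θ = (W θ)⁻¹) :
    (∀ θ : ℝ, (μ • W θ - matDeriv W θ).PosSemidef ∧
        (matDeriv W θ + μ • W θ).PosSemidef) ↔
      (∀ θ : ℝ, (μ • M θ - matDeriv M θ).PosSemidef ∧
        (matDeriv M θ + μ • M θ).PosSemidef) := by
  obtain rfl : M = fun θ => (W θ)⁻¹ := funext hM
  refine forall_congr' fun θ => ?_
  rw [matDeriv_inv hdiff fun t => (hpd t).det_pos.ne']
  exact (hpd θ).isHermitian.loewner_bound_iff_inv (hpd θ).isUnit _ μ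

theorem dual_metric_loewner_bound_iff {n : ℕ}
    (W M : ℝ → Matrix (Fin n) (Fin n) ℝ) (μ : ℝ) (hμ : 0 < μ)
    (hdiff : ∀ i j : Fin n, Differentiable ℝ fun θ => W θ i j)
    (hpd : ∀ θ : ℝ, (W θ).PosDef)
    (hinv : ∀ θ : ℝ, IsUnit (W θ))
    (hM : ∀ θ : ℝ, M θ = (W θ)⁻¹) :
    (∀ θ : ℝ, (μ • W θ - matDeriv W θ).PosSemidef ∧
        (matDeriv W θ + μ • W θ).PosSemidef) ↔
      (∀ θ : ℝ, (μ • M θ - matDeriv M θ).PosSemidef ∧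
        (matDeriv M θ + μ • M θ).PosSemidef) :=
  dual_metric_loewner_bound_iff_general W M μ hdiff hpd hM
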